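/- arXiv:2305.01470 — 2 statements merged into one kernel-verified Lean document; each statement's English description precedes it below -/
import Mathlib

section
/- Let G be a finite simple graph with vertex labeling y, and let f be the number of cut edges of G, i.e. edges {u,v} with y(u) ≠ y(v). If w = (w_0, w_1, …, w_m) is a walk in G that traverses each edge of G exactly twice, then the number of indices i ∈ {0,…,m−1} with y(w_i) ≠ y(w_{i+1}) is exactly 2·f. -/
/-- Let `G` be a finite simple graph with vertex labeling `y`, and let `f` be the
number of cut edges of `G`, i.e. edges `{u,v}` with `y u ≠ y v`.  If `w` is a walk
in `G` that traverses each edge of `G` exactly twice, then the number of steps of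
`w` whose two endpoints have different labels is exactly `2·f`. -/
theorem double_traversal_cutsize {V α : Type*} [Fintype V] [DecidableEq V]
    [DecidableEq α] (G : SimpleGraph V) (y : V → α) (f : ℕ)
    (hf : f = {e ∈ G.edgeSet | ∃ u v, e = s(u, v) ∧ y u ≠ y v}.ncard)
    {a b : V} (w : G.Walk a b)
    (hw : ∀ e ∈ G.edgeSet, w.edges.count e = 2) :
    (w.darts.filter (fun d => y d.fst ≠ y d.snd)).length = 2 * f := by
  classical
  set p : Sym2 V → Prop := fun e => ∃ u v, e = s(u, v) ∧ y u ≠ y v with hp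
  have hpe : ∀ (d : G.Dart), p d.edge ↔ y d.fst ≠ y d.snd := by
    intro d
    constructor
    · rintro ⟨u, v, he, hne⟩
      have he' : s(d.fst, d.snd) = s(u, v) := he
      rw [Sym2.eq_iff] at he'
      rcases he' with ⟨h1, h2⟩ | ⟨h1, h2⟩
      · rw [h1, h2]; exact hne
      · rw [h1, h2]; exact hne.symm
    · intro hne
      exact ⟨d.fst, d.snd, rfl, hne⟩
  have h1 : (w.darts.filter (fun d => y d.fst ≠ y d.snd)).length
      = (w.edges.filter (fun e => p e)).length := by
    rw [SimpleGraph.Walk.edges, List.filter_map, List.length_map]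
    congr 1
    apply List.filter_congr
    intro d _
    simp only [Function.comp_apply]
    exact decide_eq_decide.mpr (hpe d).symm
  set S : Finset (Sym2 V) := G.edgeFinset.filter p with hS
  have hfS : f = S.card := by
    rw [hf]
    have hset : {e ∈ G.edgeSet | p e} = ↑S := by
      ext e
      simp [hS, SimpleGraph.mem_edgeFinset, hp]
    rw [hset, Set.ncard_coe_finset]
  have hl : (w.edges.filter (fun e => p e)).toFinset = S := by
    ext e
    simp only [List.mem_toFinset, List.mem_filter, hS, Finset.mem_filter,
      SimpleGraph.mem_edgeFinset, decide_eq_true_eq]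
    constructor
    · rintro ⟨hmem, hpe'⟩
      exact ⟨w.edges_subset_edgeSet hmem, hpe'⟩
    · rintro ⟨hmem, hpe'⟩
      refine ⟨?_, hpe'⟩
      have hc := hw e hmem
      have : 0 < w.edges.count e := by omega
      exact List.count_pos_iff.mp this
  rw [h1, ← Multiset.coe_card, ← Multiset.toFinset_sum_count_eq]
  simp only [Multiset.coe_count]
  rw [show (↑(List.filter (fun e => decide (p e)) w.edges) : Multiset _).toFinset
      = S from hl]
  have hcount : ∀ e ∈ S, (w.edges.filter (fun e => p e)).count e = 2 := by
    intro e he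
    rw [hS, Finset.mem_filter, SimpleGraph.mem_edgeFinset] at he
    rw [List.count_filter (by simpa using he.2)]
    exact hw e he.1
  rw [Finset.sum_congr rfl hcount, Finset.sum_const, smul_eq_mul, hfS, mul_comm]
end

section
/- Let T be a finite tree with vertex labeling y whose cutsize (number of edges {u,v} of T with y(u) ≠ y(v)) is f. Then there exists a walk w = (w_0, w_1, …, w_m) in T that visits every vertex of T, such that the number of indices i ∈ {0,…,m−1} with y(w_i) ≠ y(w_{i+1}) is at most 2·f. -/
/-!
A connected graph has a closed walk through every vertex that uses each dart at most once: take
such a walk covering as many vertices as possible; if it missed a vertex, some edge `uv` would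
leave its support, and the detour `u → v → u` would give a larger one. Such a walk crosses each
cut edge at most twice, once in each direction.
-/

open Finset SimpleGraph

namespace SimpleGraph

variable {V : Type*} {G : SimpleGraph V}

theorem card_filter_dart_edge [Fintype V] [DecidableRel G.Adj] (P : Sym2 V → Prop)
    [DecidablePred P] : #{d : G.Dart | P d.edge} = 2 * {e ∈ G.edgeSet | P e}.ncard := by
  classical
  have hset : {e ∈ G.edgeSet | P e} = ↑({e ∈ G.edgeFinset | P e}) := by ext; simp
  rw [hset, Set.ncard_coe_finset, card_eq_sum_card_fiberwise (f := Dart.edge)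
    (t := {e ∈ G.edgeFinset | P e}) (fun d hd => by simpa [Dart.edge_mem] using hd),
    mul_comm, ← sum_const_nat]
  intro e he
  rw [mem_filter, mem_edgeFinset] at he
  rw [filter_filter, ← G.dart_edge_fiber_card e he.1]
  congr 1
  ext d
  simp only [mem_filter, mem_univ, true_and, and_iff_right_iff_imp]
  rintro rfl
  exact he.2

namespace Walk

theorem length_filter_darts_le_card_filter [Fintype V] [DecidableRel G.Adj] {a b : V}
    {w : G.Walk a b} (hw : w.darts.Nodup) (p : G.Dart → Prop) [DecidablePred p] :
    (w.darts.filter (fun d => p d)).length ≤ #{d : G.Dart | p d} := by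
  classical
  rw [← List.toFinset_card_of_nodup (hw.filter _)]
  exact card_le_card fun d => by simp

theorem exists_darts_nodup_support_toFinset_eq_insert [DecidableEq V] {a b u v : V}
    (w : G.Walk a b) (hw : w.darts.Nodup) (hu : u ∈ w.support) (hv : v ∉ w.support)
    (h : G.Adj u v) :
    ∃ w' : G.Walk a b, w'.darts.Nodup ∧ w'.support.toFinset = insert v w.support.toFinset := by
  have hspec := w.take_spec hu
  set t := w.takeUntil u hu
  set r := w.dropUntil u hu
  refine ⟨t.append (cons h (cons h.symm r)), ?_, ?_⟩
  · have hnew : ∀ d ∈ w.darts, d.fst ≠ v ∧ d.snd ≠ v := fun d hd =>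
      ⟨fun hfst => hv (hfst ▸ w.dart_fst_mem_support_of_mem_darts hd),
        fun hsnd => hv (hsnd ▸ w.dart_snd_mem_support_of_mem_darts hd)⟩
    rw [← hspec, darts_append] at hw hnew
    simp only [darts_append, darts_cons, List.nodup_append, List.nodup_cons, List.mem_cons,
      List.mem_append] at hw hnew ⊢
    refine ⟨hw.1, ⟨?_, fun hr => (hnew _ (.inr hr)).1 rfl, hw.2.1⟩, ?_⟩
    · rintro (heq | hr)
      · exact h.ne (congrArg (·.fst) heq)
      · exact (hnew _ (.inr hr)).2 rfl
    · rintro d hd _ (rfl | rfl | hr) rfl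
      exacts [(hnew _ (.inl hd)).2 rfl, (hnew _ (.inl hd)).1 rfl, hw.2.2 _ hd _ hr rfl]
  · rw [← hspec]
    ext x
    simp only [List.mem_toFinset, mem_insert, mem_support_append_iff, support_cons,
      List.mem_cons]
    have := t.end_mem_support
    have := r.start_mem_support
    grind

end Walk

theorem Connected.exists_closed_walk_darts_nodup_forall_mem_support [Finite V]
    (hG : G.Connected) : ∃ (a : V) (w : G.Walk a a), w.darts.Nodup ∧ ∀ v, v ∈ w.support := by
  classical
  obtain ⟨a⟩ := hG.nonempty
  let S : Set (Finset V) := {s | ∃ w : G.Walk a a, w.darts.Nodup ∧ w.support.toFinset = s}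
  obtain ⟨_, ⟨w, hw, rfl⟩, hmax⟩ :=
    S.exists_max_image card S.toFinite ⟨_, .nil, by simp, rfl⟩
  refine ⟨a, w, hw, fun x => by_contra fun hx => ?_⟩
  obtain ⟨d, -, hu, hv⟩ := (hG.preconnected a x).some.exists_boundary_dart
    {v | v ∈ w.support} w.start_mem_support hx
  obtain ⟨w', hw', hsupp⟩ := w.exists_darts_nodup_support_toFinset_eq_insert hw hu hv d.adj
  have := hmax _ ⟨w', hw', hsupp⟩
  rw [card_insert_of_notMem (by simpa using hv)] at this
  omega

end SimpleGraph

/-- Let `G` be a finite tree with vertex labeling `y` whose cutsize (number of edges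
`{u,v}` with `y u ≠ y v`) is `f`.  Then there exists a walk `w` in `G` visiting every
vertex such that the number of steps of `w` whose two endpoints have different labels
is at most `2·f`. -/
theorem tree_spine_reduction {V α : Type*} [Fintype V] [DecidableEq α]
    (G : SimpleGraph V) (hG : G.IsTree) (y : V → α) (f : ℕ)
    (hf : f = {e ∈ G.edgeSet | ∃ u v, e = s(u, v) ∧ y u ≠ y v}.ncard) :
    ∃ (a b : V) (w : G.Walk a b),
      (∀ v : V, v ∈ w.support) ∧
      (w.darts.filter (fun d => y d.fst ≠ y d.snd)).length ≤ 2 * f := by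
  classical
  obtain ⟨a, w, hw, hcover⟩ := hG.connected.exists_closed_walk_darts_nodup_forall_mem_support
  refine ⟨a, a, w, hcover, ?_⟩
  calc _ ≤ #{d : G.Dart | y d.fst ≠ y d.snd} := w.length_filter_darts_le_card_filter hw _
    _ = #{d : G.Dart | ∃ u v, d.edge = s(u, v) ∧ y u ≠ y v} := by
      congr 1
      ext ⟨⟨u, v⟩, _⟩
      simp only [mem_filter, mem_univ, true_and, Dart.edge_mk, Sym2.eq_iff]
      constructor
      · exact fun h => ⟨u, v, .inl ⟨rfl, rfl⟩, h⟩
      · rintro ⟨u', v', ⟨rfl, rfl⟩ | ⟨rfl, rfl⟩, h⟩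
        exacts [h, Ne.symm h]
    _ = 2 * f := hf ▸ card_filter_dart_edge (fun e => ∃ u v, e = s(u, v) ∧ y u ≠ y v)
end
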